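/- λ₁(β) is a principal eigenvalue: let β ∈ (0,1/2) and λ₁ = sup A_β. Then there exists u : T_m → ℝ with u(∅) = 1, u > 0 on T_m, u constant on each level, non-increasing with respect to the level, such that Δ_β u + λ₁ u = 0 on T_m and u(x_n) → 0 along every branch. -/

import Mathlib

/-!
Radial functions `u x = g |x|` turn `Δ_β u + λ u = 0`, `u ∅ = 1`, into a three-term recurrence
for a profile `g = g_λ`. The level infima of a positive supersolution witnessing `λ ∈ A_β` form a
radial supersolution, and a Sturm comparison of successive ratios then shows `g_λ > 0`;
conversely a uniformly positive `g_λ` is itself such a witness. At `λ₁ = sup A_β` the profile is a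
limit of positive profiles, hence nonnegative and so strictly decreasing. Its limit is `0`: while
`0 ≤ g ≤ 1` the drops `g n - g (n + 1)` are at most `λ (n + 1) p_β^n / (1 - β)`, which is summable,
so if `g_{λ₁}` stayed above `L > 0`, continuity in `λ` would keep some `g_μ` with `μ > λ₁` above
`L / 4`, i.e. `μ ∈ A_β`.
-/

open Filter Finset Topology

/-- The weight `p_β`: `1` if `β = 0`, and `β/(1-β)` otherwise. -/
noncomputable def pB (β : ℝ) : ℝ := if β = 0 then 1 else β / (1 - β)

/-- Vertices of the regular `m`-branching tree are finite sequences over `Fin m`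
(the root is `[]`, the successors of `x` are `i :: x`, the predecessor of `a :: t` is `t`,
and the level `|x|` is the list length).  The `β`-Laplacian on the tree. -/
noncomputable def lapB (m : ℕ) (β : ℝ) (u : List (Fin m) → ℝ) : List (Fin m) → ℝ
  | [] => (∑ i : Fin m, u [i]) / m - u []
  | a :: t =>
      (β * u t + (1 - β) * (∑ i : Fin m, u (i :: a :: t)) / m - u (a :: t)) *
        pB β ^ (-((a :: t).length : ℤ))

/-- A branch: an infinite path starting at the root, following successors. -/
def IsBranch (m : ℕ) (b : ℕ → List (Fin m)) : Prop :=
  b 0 = [] ∧ ∀ n, ∃ i : Fin m, b (n + 1) = i :: b n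

/-- Homogeneous Dirichlet boundary condition: `u → 0` along every branch. -/
def ZeroOnBoundary (m : ℕ) (u : List (Fin m) → ℝ) : Prop :=
  ∀ b : ℕ → List (Fin m), IsBranch m b → Tendsto (fun n => u (b n)) atTop (𝓝 0)

/-- `lam` is a principal eigenvalue of `Δ_β`: it is positive and admits a bounded
nonnegative nontrivial eigenfunction vanishing on the boundary. -/
def IsPrincipalEigenvalue (m : ℕ) (β lam : ℝ) : Prop :=
  0 < lam ∧ ∃ u : List (Fin m) → ℝ,
    (∃ M, ∀ x, |u x| ≤ M) ∧ (∀ x, 0 ≤ u x) ∧ u ≠ 0 ∧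
    (∀ x, -lapB m β u x = lam * u x) ∧ ZeroOnBoundary m u

/-- Membership in the set `A_β`. -/
def memA (m : ℕ) (β lam : ℝ) : Prop :=
  0 < lam ∧ ∃ v : List (Fin m) → ℝ, ∃ c C : ℝ, 0 < c ∧
    (∀ x, c < v x ∧ v x < C) ∧ ∀ x, lapB m β v x + lam * v x ≤ 0

/-- `λ₁(β) = sup A_β`. -/
noncomputable def lam1 (m : ℕ) (β : ℝ) : ℝ := sSup {lam | memA m β lam}

section RadialProfile

variable {β lam : ℝ}

lemma pB_eq_div (hβ : β ≠ 0) : pB β = β / (1 - β) := if_neg hβ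

lemma pB_pos (hβ0 : 0 < β) (hβ1 : β < 1) : 0 < pB β := by
  rw [pB_eq_div hβ0.ne']
  exact div_pos hβ0 (sub_pos.mpr hβ1)

lemma pB_lt_one (hβ0 : 0 < β) (hβ1 : β < 1 / 2) : pB β < 1 := by
  rw [pB_eq_div hβ0.ne', div_lt_one (by linarith)]
  linarith

/-- The level profile `g` of the radial solution of `Δ_β u + λ u = 0` with `u(∅) = 1`:
the equation at the root and at level `n + 1` read `g 1 = (1 - λ) g 0` and
`β g n + (1 - β) g (n + 2) = (1 - λ p_β^(n+1)) g (n + 1)`. -/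
noncomputable def radialProfile (β lam : ℝ) : ℕ → ℝ
  | 0 => 1
  | 1 => 1 - lam
  | n + 2 => ((1 - lam * pB β ^ (n + 1)) * radialProfile β lam (n + 1)
      - β * radialProfile β lam n) / (1 - β)

@[simp] lemma radialProfile_zero : radialProfile β lam 0 = 1 := rfl

@[simp] lemma radialProfile_one : radialProfile β lam 1 = 1 - lam := rfl

lemma radialProfile_add_two (hβ : β ≠ 1) (n : ℕ) :
    (1 - β) * radialProfile β lam (n + 2)
      = (1 - lam * pB β ^ (n + 1)) * radialProfile β lam (n + 1) - β * radialProfile β lam n := by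
  rw [radialProfile, mul_div_cancel₀ _ (sub_ne_zero.mpr hβ.symm)]

lemma continuous_radialProfile (β : ℝ) (n : ℕ) : Continuous fun lam => radialProfile β lam n := by
  induction n using Nat.twoStepInduction with
  | zero => exact continuous_const
  | one => exact continuous_const.sub continuous_id
  | more n ih₀ ih₁ =>
    simp only [radialProfile]
    fun_prop

end RadialProfile

section Laplacian

variable {m : ℕ} {β lam : ℝ}

lemma lapB_cons (u : List (Fin m) → ℝ) (a : Fin m) (t : List (Fin m)) :
    lapB m β u (a :: t) = (β * u t + (1 - β) * (∑ i : Fin m, u (i :: a :: t)) / m - u (a :: t))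
      / pB β ^ (t.length + 1) := by
  rw [lapB, List.length_cons, zpow_neg, ← div_eq_mul_inv]
  norm_cast

lemma lapB_radialProfile [NeZero m] (hβ0 : 0 < β) (hβ1 : β < 1) (x : List (Fin m)) :
    lapB m β (fun y => radialProfile β lam y.length) x + lam * radialProfile β lam x.length
      = 0 := by
  have hm : (m : ℝ) ≠ 0 := Nat.cast_ne_zero.mpr (NeZero.ne m)
  cases x with
  | nil =>
    simp only [lapB, List.length_cons, List.length_nil, zero_add, sum_const, card_univ,
      Fintype.card_fin, nsmul_eq_mul, mul_div_cancel_left₀ _ hm, radialProfile_one, radialProfile_zero]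
    ring
  | cons a t =>
    have hq : pB β ^ (t.length + 1) ≠ 0 := (pow_pos (pB_pos hβ0 hβ1) _).ne'
    have hrec := radialProfile_add_two (lam := lam) hβ1.ne t.length
    simp only [lapB_cons, List.length_cons, sum_const, card_univ, Fintype.card_fin, nsmul_eq_mul]
    rw [mul_div_assoc, mul_div_cancel_left₀ _ hm, div_add' _ _ _ hq, div_eq_zero_iff]
    left
    linear_combination hrec

end Laplacian

section Drops

variable {β lam : ℝ}

local notation "g" => radialProfile β lam

lemma radialProfile_drop_succ (hβ : β ≠ 1) (n : ℕ) :
    (1 - β) * (g (n + 1) - g (n + 2))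
      = β * (g n - g (n + 1)) + lam * pB β ^ (n + 1) * g (n + 1) := by
  linear_combination -radialProfile_add_two hβ n

lemma radialProfile_succ_lt (hβ0 : 0 < β) (hβ1 : β < 1) (hlam : 0 < lam) {n : ℕ}
    (hg : ∀ j ≤ n, 0 ≤ g j) : g (n + 1) < g n := by
  induction n with
  | zero => simpa using hlam
  | succ n ih =>
    have hdrop := radialProfile_drop_succ (lam := lam) hβ1.ne n
    have hprev : 0 < β * (g n - g (n + 1)) :=
      mul_pos hβ0 (sub_pos.mpr (ih fun j hj => hg j (by omega)))
    have hnew : 0 ≤ lam * pB β ^ (n + 1) * g (n + 1) :=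
      mul_nonneg (mul_nonneg hlam.le (pow_pos (pB_pos hβ0 hβ1) _).le) (hg _ le_rfl)
    have : 0 < (1 - β) * (g (n + 1) - g (n + 2)) := by linarith
    linarith [(pos_iff_pos_of_mul_pos this).mp (sub_pos.mpr hβ1)]

lemma radialProfile_le_one (hβ0 : 0 < β) (hβ1 : β < 1) (hlam : 0 < lam) {n : ℕ}
    (hg : ∀ j < n, 0 ≤ g j) : g n ≤ 1 := by
  induction n with
  | zero => simp
  | succ n ih =>
    exact (radialProfile_succ_lt hβ0 hβ1 hlam fun j hj => hg j (by omega)).le.trans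
      (ih fun j hj => hg j (by omega))

lemma strictAnti_radialProfile (hβ0 : 0 < β) (hβ1 : β < 1) (hlam : 0 < lam)
    (hg : ∀ n, 0 ≤ g n) : StrictAnti g :=
  strictAnti_nat_of_succ_lt fun _ => radialProfile_succ_lt hβ0 hβ1 hlam fun j _ => hg j

/-- Bound on the drop `g n - g (n + 1)` per unit of `λ`, valid while `g ≤ 1`. -/
noncomputable def dropBound (β : ℝ) (n : ℕ) : ℝ := (n + 1) * pB β ^ n / (1 - β)

noncomputable def dropTail (β : ℝ) (N : ℕ) : ℝ := ∑' k, dropBound β (k + N)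

lemma radialProfile_sub_succ_le (hβ0 : 0 < β) (hβ1 : β < 1) (hlam : 0 ≤ lam) {n : ℕ}
    (hg : ∀ j ≤ n, g j ≤ 1) : g n - g (n + 1) ≤ lam * dropBound β n := by
  have hβ' : 0 < 1 - β := sub_pos.mpr hβ1
  induction n with
  | zero =>
    have h : lam ≤ lam * (1 / (1 - β)) :=
      le_mul_of_one_le_right hlam (by rw [le_div_iff₀ hβ']; linarith)
    simpa [dropBound] using h
  | succ n ih =>
    have hprev : β * (g n - g (n + 1)) ≤ β * (lam * dropBound β n) :=
      mul_le_mul_of_nonneg_left (ih fun j hj => hg j (by omega)) hβ0.le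
    have hnew : lam * pB β ^ (n + 1) * g (n + 1) ≤ lam * pB β ^ (n + 1) :=
      mul_le_of_le_one_right (mul_nonneg hlam (pow_pos (pB_pos hβ0 hβ1) _).le) (hg _ (by omega))
    have hbound : β * (lam * dropBound β n) + lam * pB β ^ (n + 1)
        = (1 - β) * (lam * dropBound β (n + 1)) := by
      have hne : 1 - β ≠ 0 := hβ'.ne'
      calc β * (lam * dropBound β n) + lam * pB β ^ (n + 1)
          = lam * ((n + 1) * pB β ^ n) * (β / (1 - β)) + lam * pB β ^ (n + 1) := by
            unfold dropBound; ring
        _ = (1 - β) * (lam * dropBound β (n + 1)) := by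
            rw [← pB_eq_div hβ0.ne']; unfold dropBound; field_simp; push_cast; ring
    refine le_of_mul_le_mul_left ?_ hβ'
    linarith [radialProfile_drop_succ (lam := lam) hβ1.ne n]

lemma dropBound_nonneg (hβ0 : 0 < β) (hβ1 : β < 1) (n : ℕ) : 0 ≤ dropBound β n :=
  div_nonneg (mul_nonneg (by positivity) (pow_pos (pB_pos hβ0 hβ1) n).le) (sub_pos.mpr hβ1).le

lemma summable_dropBound (hβ0 : 0 < β) (hβ1 : β < 1 / 2) : Summable (dropBound β) := by
  have hp0 := pB_pos hβ0 (by linarith)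
  have hp1 := pB_lt_one hβ0 hβ1
  have hmul := summable_pow_mul_geometric_of_norm_lt_one 1
    (by rwa [Real.norm_of_nonneg hp0.le] : ‖pB β‖ < 1)
  refine ((hmul.add (summable_geometric_of_lt_one hp0.le hp1)).div_const (1 - β)).congr fun n => ?_
  simp only [dropBound, pow_one]
  ring

lemma dropTail_nonneg (hβ0 : 0 < β) (hβ1 : β < 1) (N : ℕ) : 0 ≤ dropTail β N :=
  tsum_nonneg fun k => dropBound_nonneg hβ0 hβ1 (k + N)

lemma tendsto_dropTail (β : ℝ) : Tendsto (dropTail β) atTop (𝓝 0) :=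
  tendsto_sum_nat_add (dropBound β)

lemma sum_Ico_dropBound_le_dropTail (hβ0 : 0 < β) (hβ1 : β < 1 / 2) (N n : ℕ) :
    ∑ k ∈ Ico N n, dropBound β k ≤ dropTail β N := by
  rw [sum_Ico_eq_sum_range]
  simp_rw [add_comm N]
  exact ((summable_nat_add_iff N).mpr (summable_dropBound hβ0 hβ1)).sum_le_tsum _
    fun k _ => dropBound_nonneg hβ0 (by linarith) (k + N)

lemma radialProfile_sub_le_dropTail (hβ0 : 0 < β) (hβ1 : β < 1 / 2) (hlam : 0 < lam) {N n : ℕ}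
    (hNn : N ≤ n) (hg : ∀ j < n, 0 ≤ g j) : g N - g n ≤ lam * dropTail β N := by
  have hβ1' : β < 1 := by linarith
  calc g N - g n = ∑ k ∈ Ico N n, (g k - g (k + 1)) := by
        rw [← neg_sub, ← sum_Ico_sub _ hNn, ← sum_neg_distrib]
        simp only [neg_sub]
    _ ≤ ∑ k ∈ Ico N n, lam * dropBound β k := by
        refine sum_le_sum fun k hk => radialProfile_sub_succ_le hβ0 hβ1' hlam.le fun j hj => ?_
        exact radialProfile_le_one hβ0 hβ1' hlam fun i hi => hg i (by rw [mem_Ico] at hk; omega)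
    _ = lam * ∑ k ∈ Ico N n, dropBound β k := (mul_sum _ _ _).symm
    _ ≤ lam * dropTail β N :=
        mul_le_mul_of_nonneg_left (sum_Ico_dropBound_le_dropTail hβ0 hβ1 N n) hlam.le

lemma sub_dropTail_le_radialProfile (hβ0 : 0 < β) (hβ1 : β < 1 / 2) (hlam : 0 < lam) {N : ℕ}
    (hg : ∀ k ≤ N, 0 ≤ g k) (hT : lam * dropTail β N ≤ g N) (n : ℕ) :
    g N - lam * dropTail β N ≤ g n := by
  have hnonneg : ∀ n, 0 ≤ g n := by
    intro n
    induction n using Nat.strong_induction_on with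
    | _ n ih =>
      rcases le_or_gt n N with hn | hn
      · exact hg n hn
      · linarith [radialProfile_sub_le_dropTail hβ0 hβ1 hlam hn.le ih]
  rcases le_total N n with hNn | hnN
  · linarith [radialProfile_sub_le_dropTail hβ0 hβ1 hlam hNn fun j _ => hnonneg j]
  · have hanti := (strictAnti_radialProfile hβ0 (by linarith) hlam hnonneg).antitone hnN
    have htail := mul_nonneg hlam.le (dropTail_nonneg hβ0 (by linarith) N)
    linarith

lemma exists_gt_le_radialProfile {L : ℝ} (hβ0 : 0 < β) (hβ1 : β < 1 / 2) (hlam : 0 < lam)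
    (hL : 0 < L) (hg : ∀ n, L ≤ g n) :
    ∃ μ > lam, ∀ n, L / 4 ≤ radialProfile β μ n := by
  obtain ⟨N, hN⟩ := ((tendsto_dropTail β).eventually
    (gt_mem_nhds (by positivity : 0 < L / (2 * (lam + 1))))).exists
  have hnear : ∀ᶠ μ in 𝓝 lam, μ < lam + 1 ∧ ∀ k ∈ Set.Iic N, 3 * L / 4 < radialProfile β μ k :=
    (gt_mem_nhds (lt_add_one lam)).and <| (eventually_all_finite (Set.finite_Iic N)).mpr
      fun k _ =>
        ((continuous_radialProfile β k).tendsto lam).eventually_const_lt (by linarith [hg k])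
  obtain ⟨μ, ⟨hμ1, hμN⟩, hμ⟩ :=
    ((hnear.filter_mono nhdsWithin_le_nhds).and (self_mem_nhdsWithin (s := Set.Ioi lam))).exists
  have hT : μ * dropTail β N ≤ L / 2 := by
    rw [lt_div_iff₀ (by positivity)] at hN
    nlinarith [dropTail_nonneg hβ0 (by linarith) N]
  refine ⟨μ, hμ, fun n => ?_⟩
  have hμN' := hμN N (Set.mem_Iic.mpr le_rfl)
  linarith [sub_dropTail_le_radialProfile hβ0 hβ1 (hlam.trans hμ)
    (fun k hk => by linarith [hμN k hk]) (by linarith) n]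

end Drops

section Comparison

variable {β lam : ℝ}

local notation "g" => radialProfile β lam

/-- Sturm comparison: the ratio `b (n + 1) / b n` stays below `g (n + 1) / g n` at every level. -/
lemma radialProfile_pos_of_supersolution (hβ0 : 0 ≤ β) (hβ1 : β < 1) {b : ℕ → ℝ}
    (hb : ∀ n, 0 < b n) (hroot : b 1 ≤ (1 - lam) * b 0)
    (hlevel : ∀ n, (1 - β) * b (n + 2) ≤ (1 - lam * pB β ^ (n + 1)) * b (n + 1) - β * b n)
    (n : ℕ) : 0 < g n := by
  suffices h : ∀ n, 0 < g n ∧ b (n + 1) * g n ≤ g (n + 1) * b n from (h n).1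
  intro n
  induction n with
  | zero => simpa using hroot
  | succ n ih =>
    obtain ⟨hgn, hratio⟩ := ih
    have hgn1 : 0 < g (n + 1) := pos_of_mul_pos_left
      ((mul_pos (hb (n + 1)) hgn).trans_le hratio) (hb n).le
    refine ⟨hgn1, le_of_mul_le_mul_left ?_ (sub_pos.mpr hβ1)⟩
    have hsup := mul_le_mul_of_nonneg_right (hlevel n) hgn1.le
    have hprev := mul_le_mul_of_nonneg_left hratio hβ0
    linear_combination hsup + hprev - b (n + 1) * radialProfile_add_two (lam := lam) hβ1.ne n

end Comparison

section LevelInf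

variable {α : Type*} {v : List α → ℝ} {c : ℝ} {n : ℕ}

noncomputable def levelInf (v : List α → ℝ) (n : ℕ) : ℝ := ⨅ x : {x : List α // x.length = n}, v x

lemma levelInf_le (hv : BddBelow (Set.range v)) (x : List α) : levelInf v x.length ≤ v x :=
  ciInf_le (f := fun y : {y : List α // y.length = x.length} => v y)
    (hv.mono (Set.range_comp_subset_range Subtype.val v)) ⟨x, rfl⟩

lemma le_levelInf [Nonempty α] (h : ∀ x : List α, x.length = n → c ≤ v x) : c ≤ levelInf v n :=
  have : Nonempty {x : List α // x.length = n} :=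
    ⟨⟨List.replicate n (Classical.arbitrary α), List.length_replicate⟩⟩
  le_ciInf fun x => h x x.2

lemma levelInf_zero [Nonempty α] (hv : BddBelow (Set.range v)) : levelInf v 0 = v [] :=
  le_antisymm (levelInf_le hv []) (le_levelInf fun x hx => by rw [List.length_eq_zero_iff.mp hx])

end LevelInf

section Supersolution

variable {m : ℕ} [NeZero m] {β lam c : ℝ} {v : List (Fin m) → ℝ}

lemma levelInf_succ_le_avg (hv : BddBelow (Set.range v)) (x : List (Fin m)) :
    levelInf v (x.length + 1) ≤ (∑ i : Fin m, v (i :: x)) / m := by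
  rw [le_div_iff₀ (Nat.cast_pos.mpr (NeZero.pos m))]
  have h := card_nsmul_le_sum univ (fun i => v (i :: x)) (levelInf v (x.length + 1))
    fun i _ => levelInf_le hv (i :: x)
  simpa [mul_comm] using h

lemma levelInf_one_le (hv : BddBelow (Set.range v)) (hroot : lapB m β v [] + lam * v [] ≤ 0) :
    levelInf v 1 ≤ (1 - lam) * levelInf v 0 := by
  have havg := levelInf_succ_le_avg hv []
  rw [levelInf_zero hv]
  simp only [lapB, List.length_nil, zero_add] at hroot havg
  linarith

lemma levelInf_add_two_le (hβ0 : 0 < β) (hβ1 : β < 1) (hc : 0 < c) (hv : ∀ x, c ≤ v x)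
    (hsup : ∀ x, lapB m β v x + lam * v x ≤ 0) (n : ℕ) :
    (1 - β) * levelInf v (n + 2)
      ≤ (1 - lam * pB β ^ (n + 1)) * levelInf v (n + 1) - β * levelInf v n := by
  have hbdd : BddBelow (Set.range v) := ⟨c, by rintro _ ⟨x, rfl⟩; exact hv x⟩
  have hq : 0 < pB β ^ (n + 1) := pow_pos (pB_pos hβ0 hβ1) _
  set K := β * levelInf v n + (1 - β) * levelInf v (n + 2)
  have hK : 0 < K := add_pos_of_nonneg_of_pos
    (mul_nonneg hβ0.le (hc.le.trans (le_levelInf fun x _ => hv x)))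
    (mul_pos (sub_pos.mpr hβ1) (hc.trans_le (le_levelInf fun x _ => hv x)))
  have hvertex : ∀ x : List (Fin m), x.length = n + 1 → K ≤ (1 - lam * pB β ^ (n + 1)) * v x := by
    rintro (_ | ⟨a, t⟩) hx
    · simp at hx
    · have ht : t.length = n := by simpa using hx
      have hvx := hsup (a :: t)
      rw [lapB_cons, ht, ← le_neg_iff_add_nonpos_right, div_le_iff₀ hq] at hvx
      have hparent := levelInf_le hbdd t
      have hchildren := levelInf_succ_le_avg hbdd (a :: t)
      rw [ht] at hparent
      simp only [List.length_cons, ht] at hchildren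
      have hparent' := mul_le_mul_of_nonneg_left hparent hβ0.le
      have hchildren' := mul_le_mul_of_nonneg_left hchildren (sub_pos.mpr hβ1).le
      rw [mul_div_assoc'] at hchildren'
      linarith
  -- the infimum over level `n + 1` passes through the coefficient only if it is positive
  have hcoef : 0 < 1 - lam * pB β ^ (n + 1) := by
    have h := hvertex (List.replicate (n + 1) 0) List.length_replicate
    exact (pos_iff_pos_of_mul_pos (hK.trans_le h)).mpr (hc.trans_le (hv _))
  have hinf : K / (1 - lam * pB β ^ (n + 1)) ≤ levelInf v (n + 1) :=
    le_levelInf fun x hx => (div_le_iff₀' hcoef).mpr (hvertex x hx)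
  linarith [(div_le_iff₀' hcoef).mp hinf]

lemma radialProfile_pos_of_memA (hβ0 : 0 < β) (hβ1 : β < 1) (h : memA m β lam) (n : ℕ) :
    0 < radialProfile β lam n := by
  obtain ⟨-, v, c, _, hc, hv, hsup⟩ := h
  have hvc : ∀ x, c ≤ v x := fun x => (hv x).1.le
  have hbdd : BddBelow (Set.range v) := ⟨c, by rintro _ ⟨x, rfl⟩; exact hvc x⟩
  exact radialProfile_pos_of_supersolution (b := levelInf v) hβ0.le hβ1
    (fun n => hc.trans_le (le_levelInf fun x _ => hvc x)) (levelInf_one_le hbdd (hsup []))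
    (levelInf_add_two_le hβ0 hβ1 hc hvc hsup) n

end Supersolution

section PrincipalEigenvalue

variable {m : ℕ} {β lam μ : ℝ}

lemma memA_of_le (hlam : 0 < lam) (hle : lam ≤ μ) (hμ : memA m β μ) : memA m β lam := by
  obtain ⟨-, v, c, C, hc, hv, hsup⟩ := hμ
  refine ⟨hlam, v, c, C, hc, hv, fun x => ?_⟩
  nlinarith [hsup x, (hc.trans (hv x).1)]

variable [NeZero m]

lemma memA_of_le_radialProfile (hβ0 : 0 < β) (hβ1 : β < 1) (hlam : 0 < lam) {c : ℝ} (hc : 0 < c)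
    (hg : ∀ n, c ≤ radialProfile β lam n) : memA m β lam := by
  have hle_one : ∀ n, radialProfile β lam n ≤ 1 := fun n =>
    radialProfile_le_one hβ0 hβ1 hlam fun j _ => hc.le.trans (hg j)
  refine ⟨hlam, fun x => radialProfile β lam x.length, c / 2, 2, half_pos hc, fun x => ⟨?_, ?_⟩,
    fun x => (lapB_radialProfile hβ0 hβ1 x).le⟩
  · linarith [hg x.length]
  · linarith [hle_one x.length]

lemma exists_memA (hβ0 : 0 < β) (hβ1 : β < 1 / 2) : ∃ lam, memA m β lam := by
  have hT : 0 < dropTail β 0 := by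
    simp only [dropTail, add_zero]
    refine (summable_dropBound hβ0 hβ1).tsum_pos (dropBound_nonneg hβ0 (by linarith)) 0 ?_
    simpa [dropBound] using (by linarith : 0 < 1 - β)
  have hlam : 0 < 1 / (2 * dropTail β 0) := by positivity
  have hdrop : 1 / (2 * dropTail β 0) * dropTail β 0 = 1 / 2 := by field_simp
  have hg := sub_dropTail_le_radialProfile hβ0 hβ1 hlam (N := 0)
    (fun k hk => by simp [Nat.le_zero.mp hk]) (by rw [hdrop]; norm_num)
  refine ⟨_, memA_of_le_radialProfile hβ0 (by linarith) hlam one_half_pos fun n => ?_⟩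
  linarith [hg n, radialProfile_zero (β := β) (lam := 1 / (2 * dropTail β 0))]

lemma bddAbove_memA (hβ0 : 0 < β) (hβ1 : β < 1) : BddAbove {lam | memA m β lam} :=
  ⟨1, fun lam h => by simpa using (radialProfile_pos_of_memA hβ0 hβ1 h 1).le⟩

lemma lam1_pos (hβ0 : 0 < β) (hβ1 : β < 1 / 2) : 0 < lam1 m β := by
  obtain ⟨lam, h⟩ := exists_memA (m := m) hβ0 hβ1
  exact h.1.trans_le (le_csSup (bddAbove_memA hβ0 (by linarith)) h)

lemma memA_of_lt_lam1 (hβ0 : 0 < β) (hβ1 : β < 1 / 2) (hlam : 0 < lam) (hlt : lam < lam1 m β) :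
    memA m β lam := by
  obtain ⟨μ, hμ, hltμ⟩ := exists_lt_of_lt_csSup (exists_memA hβ0 hβ1) hlt
  exact memA_of_le hlam hltμ.le hμ

lemma radialProfile_lam1_nonneg (hβ0 : 0 < β) (hβ1 : β < 1 / 2) (n : ℕ) :
    0 ≤ radialProfile β (lam1 m β) n := by
  refine ge_of_tendsto ((continuous_radialProfile β n).tendsto _ |>.mono_left nhdsWithin_le_nhds)
    (?_ : ∀ᶠ lam in 𝓝[<] lam1 m β, 0 ≤ radialProfile β lam n)
  filter_upwards [Ioo_mem_nhdsLT (lam1_pos hβ0 hβ1)] with lam hlam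
  exact (radialProfile_pos_of_memA hβ0 (by linarith) (memA_of_lt_lam1 hβ0 hβ1 hlam.1 hlam.2) n).le

lemma strictAnti_radialProfile_lam1 (hβ0 : 0 < β) (hβ1 : β < 1 / 2) :
    StrictAnti (radialProfile β (lam1 m β)) :=
  strictAnti_radialProfile hβ0 (by linarith) (lam1_pos hβ0 hβ1) (radialProfile_lam1_nonneg hβ0 hβ1)

lemma radialProfile_lam1_pos (hβ0 : 0 < β) (hβ1 : β < 1 / 2) (n : ℕ) :
    0 < radialProfile β (lam1 m β) n :=
  (radialProfile_lam1_nonneg hβ0 hβ1 (n + 1)).trans_lt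
    (strictAnti_radialProfile_lam1 hβ0 hβ1 n.lt_succ_self)

lemma tendsto_radialProfile_lam1 (hβ0 : 0 < β) (hβ1 : β < 1 / 2) :
    Tendsto (radialProfile β (lam1 m β)) atTop (𝓝 0) := by
  have hnonneg := radialProfile_lam1_nonneg (m := m) hβ0 hβ1
  have hbdd : BddBelow (Set.range (radialProfile β (lam1 m β))) :=
    ⟨0, by rintro _ ⟨n, rfl⟩; exact hnonneg n⟩
  have hlim := tendsto_atTop_ciInf (strictAnti_radialProfile_lam1 hβ0 hβ1).antitone hbdd
  suffices hinf : ⨅ n, radialProfile β (lam1 m β) n = 0 by rwa [hinf] at hlim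
  by_contra hinf
  have hpos := lt_of_le_of_ne (le_ciInf hnonneg) (Ne.symm hinf)
  obtain ⟨μ, hμ, hμg⟩ := exists_gt_le_radialProfile hβ0 hβ1 (lam1_pos hβ0 hβ1) hpos (ciInf_le hbdd)
  have hmem := memA_of_le_radialProfile (m := m) hβ0 (by linarith)
    ((lam1_pos hβ0 hβ1).trans hμ) (by positivity) hμg
  exact hμ.not_ge (le_csSup (bddAbove_memA hβ0 (by linarith)) hmem)

end PrincipalEigenvalue

lemma IsBranch.length_eq {m : ℕ} {b : ℕ → List (Fin m)} (hb : IsBranch m b) (n : ℕ) :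
    (b n).length = n := by
  induction n with
  | zero => rw [hb.1, List.length_nil]
  | succ n ih =>
    obtain ⟨i, hi⟩ := hb.2 n
    rw [hi, List.length_cons, ih]

theorem stmt19 (m : ℕ) (hm : 2 ≤ m) (β : ℝ) (hβ0 : 0 < β) (hβ1 : β < 1 / 2) :
    ∃ u : List (Fin m) → ℝ,
      u [] = 1 ∧ (∀ x, 0 < u x) ∧
      (∃ g : ℕ → ℝ, Antitone g ∧ ∀ x, u x = g x.length) ∧
      (∀ x, lapB m β u x + lam1 m β * u x = 0) ∧
      ZeroOnBoundary m u := by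
  have : NeZero m := ⟨by omega⟩
  refine ⟨fun x => radialProfile β (lam1 m β) x.length, rfl,
    fun x => radialProfile_lam1_pos hβ0 hβ1 x.length,
    ⟨_, (strictAnti_radialProfile_lam1 hβ0 hβ1).antitone, fun _ => rfl⟩,
    lapB_radialProfile hβ0 (by linarith), fun b hb => ?_⟩
  simpa only [hb.length_eq] using tendsto_radialProfile_lam1 (m := m) hβ0 hβ1
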